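/- arXiv:2509.26260 — 4 statements merged into one kernel-verified Lean document; each statement's English description precedes it below -/
import Mathlib

section
/- Let G be an Eulerian digraph and let X₁, X₂ ⊆ V(G) be disjoint vertex sets. Then for every natural number k, either there is a collection of pairwise edge-disjoint directed paths consisting of k paths from X₁ to X₂ and k paths from X₂ to X₁, or there is a partition (X, V∖X) of the vertices with X₁ ⊆ X, X₂ ⊆ V∖X and δ(X) < 2k. -/
structure MDigraph where
  V : Type
  E : Type
  [fintV : Fintype V]
  [fintE : Fintype E]
  [decV : DecidableEq V]
  [decE : DecidableEq E]
  tail : E → V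
  head : E → V

attribute [instance] MDigraph.fintV MDigraph.fintE MDigraph.decV MDigraph.decE

/-- An Eulerian digraph: every vertex has equal in-degree and out-degree. -/
def MDigraph.Eulerian (G : MDigraph) : Prop :=
  ∀ v : G.V, Nat.card {e : G.E // G.head e = v} = Nat.card {e : G.E // G.tail e = v}

/-- A directed trail: a nonempty walk without repeated edges. -/
structure MDigraph.Trail (G : MDigraph) : Type where
  edges : List G.E
  nonempty : edges ≠ []
  chain : edges.Chain' (fun e f => G.head e = G.tail f)
  nodup : edges.Nodup

def MDigraph.Trail.first {G : MDigraph} (t : G.Trail) : G.V :=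
  G.tail (t.edges.head t.nonempty)

def MDigraph.Trail.last {G : MDigraph} (t : G.Trail) : G.V :=
  G.head (t.edges.getLast t.nonempty)

/-- The internal vertices of a trail, in order. -/
def MDigraph.Trail.internals {G : MDigraph} (t : G.Trail) : List G.V :=
  t.edges.dropLast.map G.head

/-!
Call an edge set `F` a flow of value `m` from `A` to `B` when its excess (out-degree minus
in-degree) vanishes off `A ∪ B`, is `≥ 0` on `A`, `≤ 0` on `B`, and sums to `m` over `A`. Such an
`F` splits greedily into `m` edge-disjoint trails from `A` to `B`: walk from a vertex of positive
excess until the walk gets stuck, which only happens at a vertex of negative excess.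

Ford–Fulkerson augmentation along residual paths raises the value one unit at a time. When no
residual path from `X₁` to `X₂` exists, the residually reachable set `X` is crossed outwards by
exactly the `m` edges of `F` leaving it and inwards by none of `F`; since `G` is Eulerian, as many
edges enter `X` as leave it, so `δ(X) = 2m < 2k`. Otherwise we obtain a flow `F` of value `k`, and
since `G` is Eulerian its complement is a flow of value `k` from `X₂` to `X₁`, giving the return
trails edge-disjoint from the first ones.
-/

open Finset Function

lemma Fin.pairwise_cons_of_symmetric {α : Type*} {n : ℕ} {r : α → α → Prop}
    (hr : ∀ x y, r x y → r y x) {a : α} {f : Fin n → α} (ha : ∀ i, r a (f i))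
    (hf : Pairwise (r on f)) :
    Pairwise (r on (Fin.cons a f : Fin (n + 1) → α)) := by
  intro i j hij
  cases i using Fin.cases <;> cases j using Fin.cases
  · exact absurd rfl hij
  · exact ha _
  · exact hr _ _ (ha _)
  · exact hf (ne_of_apply_ne Fin.succ hij)

section Walks

variable {α V : Type*}

section EdgeExcess

variable [DecidableEq V]

def edgeExcess (u v x : V) : ℤ := (if u = x then 1 else 0) - (if v = x then 1 else 0)

lemma edgeExcess_self (u x : V) : edgeExcess u u x = 0 := sub_self _

lemma edgeExcess_add_edgeExcess (u v w x : V) :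
    edgeExcess u v x + edgeExcess v w x = edgeExcess u w x := by
  unfold edgeExcess; ring

lemma edgeExcess_swap (u v x : V) : edgeExcess v u x = -edgeExcess u v x := by
  unfold edgeExcess; ring

lemma sum_edgeExcess [Fintype V] (u v : V) : ∑ x, edgeExcess u v x = 0 := by
  simp [edgeExcess, sum_sub_distrib]

lemma sum_filter_edgeExcess [Fintype V] (X : Set V) [DecidablePred (· ∈ X)] (u v : V) :
    ∑ x ∈ univ.filter (· ∈ X), edgeExcess u v x =
      (if u ∈ X then 1 else 0) - (if v ∈ X then 1 else 0) := by
  simp [edgeExcess, sum_sub_distrib]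

end EdgeExcess

variable (src dst : α → V)

def IsWalk : V → V → List α → Prop
  | u, v, [] => u = v
  | u, v, e :: w => src e = u ∧ IsWalk (dst e) v w

variable {src dst}

lemma IsWalk.concat {u v : V} {w : List α} (hw : IsWalk src dst u v w) {e : α} (he : src e = v) :
    IsWalk src dst u (dst e) (w ++ [e]) := by
  induction w generalizing u with
  | nil => exact ⟨he.trans hw.symm, rfl⟩
  | cons f w ih => exact ⟨hw.1, ih hw.2⟩

lemma IsWalk.of_append_cons {u v : V} {w₁ w₂ : List α} {e : α}
    (hw : IsWalk src dst u v (w₁ ++ e :: w₂)) : IsWalk src dst (src e) v (e :: w₂) := by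
  induction w₁ generalizing u with
  | nil => exact ⟨rfl, hw.2⟩
  | cons f w₁ ih => exact ih hw.2

lemma IsWalk.exists_nodup {u v : V} {w : List α} (hw : IsWalk src dst u v w) :
    ∃ w', IsWalk src dst u v w' ∧ w'.Nodup := by
  induction w generalizing u with
  | nil => exact ⟨[], hw, List.nodup_nil⟩
  | cons e w ih =>
    obtain ⟨w', hw', hnd⟩ := ih hw.2
    by_cases he : e ∈ w'
    · obtain ⟨w₁, w₂, rfl⟩ := List.append_of_mem he
      exact ⟨e :: w₂, hw.1 ▸ hw'.of_append_cons, hnd.sublist (List.sublist_append_right _ _)⟩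
    · exact ⟨e :: w', ⟨hw.1, hw'⟩, List.nodup_cons.2 ⟨he, hnd⟩⟩

lemma IsWalk.sum_edgeExcess [DecidableEq V] {u v : V} {w : List α} (hw : IsWalk src dst u v w)
    (x : V) :
    (w.map fun e => edgeExcess (src e) (dst e) x).sum = edgeExcess u v x := by
  induction w generalizing u with
  | nil => rw [hw]; simp [edgeExcess_self]
  | cons e w ih => rw [List.map_cons, List.sum_cons, ih hw.2, hw.1, edgeExcess_add_edgeExcess]

lemma IsWalk.isChain {u v : V} {w : List α} (hw : IsWalk src dst u v w) :
    w.IsChain (fun e f => dst e = src f) := by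
  induction w generalizing u with
  | nil => exact List.IsChain.nil
  | cons e w ih =>
    cases w with
    | nil => exact List.isChain_singleton e
    | cons f w => exact List.isChain_cons_cons.2 ⟨hw.2.1.symm, ih hw.2⟩

lemma IsWalk.src_head {u v : V} {w : List α} (hw : IsWalk src dst u v w) (hne : w ≠ []) :
    src (w.head hne) = u := by
  cases w with
  | nil => exact absurd rfl hne
  | cons e w => exact hw.1

lemma IsWalk.dst_getLast {u v : V} {w : List α} (hw : IsWalk src dst u v w) (hne : w ≠ []) :
    dst (w.getLast hne) = v := by
  induction w generalizing u with
  | nil => exact absurd rfl hne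
  | cons e w ih =>
    cases w with
    | nil => exact hw.2
    | cons f w => rw [List.getLast_cons (List.cons_ne_nil f w)]; exact ih hw.2 _

end Walks

namespace MDigraph

variable {G : MDigraph}

def Trail.ofIsWalk {s t : G.V} {l : List G.E} (hne : l ≠ []) (hw : IsWalk G.tail G.head s t l)
    (hnd : l.Nodup) : G.Trail :=
  ⟨l, hne, hw.isChain, hnd⟩

lemma Trail.ofIsWalk_first {s t : G.V} {l : List G.E} (hne : l ≠ [])
    (hw : IsWalk G.tail G.head s t l) (hnd : l.Nodup) : (Trail.ofIsWalk hne hw hnd).first = s :=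
  hw.src_head hne

lemma Trail.ofIsWalk_last {s t : G.V} {l : List G.E} (hne : l ≠ [])
    (hw : IsWalk G.tail G.head s t l) (hnd : l.Nodup) : (Trail.ofIsWalk hne hw hnd).last = t :=
  hw.dst_getLast hne

def excess (F : Finset G.E) (x : G.V) : ℤ := ∑ e ∈ F, edgeExcess (G.tail e) (G.head e) x

/-- The paper's `δ(X)`. -/
noncomputable def cutSize (X : Set G.V) : ℕ :=
  Nat.card {e : G.E // (G.tail e ∈ X ∧ G.head e ∉ X) ∨ (G.tail e ∉ X ∧ G.head e ∈ X)}

lemma excess_empty (x : G.V) : excess (∅ : Finset G.E) x = 0 := sum_empty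

lemma excess_sdiff {F S : Finset G.E} (h : S ⊆ F) (x : G.V) :
    excess (F \ S) x = excess F x - excess S x :=
  sum_sdiff_eq_sub h

lemma excess_toFinset_of_isWalk {u v : G.V} {w : List G.E} (hw : IsWalk G.tail G.head u v w)
    (hnd : w.Nodup) (x : G.V) : excess w.toFinset x = edgeExcess u v x := by
  rw [excess, List.sum_toFinset _ hnd, hw.sum_edgeExcess]

lemma exists_tail_eq_of_excess_pos {F : Finset G.E} {x : G.V} (h : 0 < excess F x) :
    ∃ e ∈ F, G.tail e = x := by
  obtain ⟨e, he, hpos⟩ := exists_lt_of_sum_lt (f := fun _ => (0 : ℤ)) (by simpa [excess] using h)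
  refine ⟨e, he, by_contra fun hne => ?_⟩
  simp only [edgeExcess, if_neg hne] at hpos
  split_ifs at hpos <;> omega

lemma sum_excess_eq_zero (F : Finset G.E) : ∑ x, excess F x = 0 := by
  unfold excess
  rw [sum_comm]
  exact sum_eq_zero fun e _ => sum_edgeExcess _ _

lemma sum_filter_excess (F : Finset G.E) (X : Set G.V) [DecidablePred (· ∈ X)] :
    ∑ x ∈ univ.filter (· ∈ X), excess F x =
      #{e ∈ F | G.tail e ∈ X ∧ G.head e ∉ X} - #{e ∈ F | G.head e ∈ X ∧ G.tail e ∉ X} := by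
  unfold excess
  rw [sum_comm]
  simp only [sum_filter_edgeExcess]
  have h : ∀ e : G.E, ((if G.tail e ∈ X then 1 else 0) - (if G.head e ∈ X then 1 else 0) : ℤ) =
      (if G.tail e ∈ X ∧ G.head e ∉ X then 1 else 0) -
        (if G.head e ∈ X ∧ G.tail e ∉ X then 1 else 0) := by
    intro e; split_ifs <;> simp_all
  simp only [h, sum_sub_distrib, sum_boole]

lemma Eulerian.excess_univ (hG : G.Eulerian) (x : G.V) : excess univ x = 0 := by
  have h := hG x
  rw [Nat.card_eq_fintype_card, Nat.card_eq_fintype_card, Fintype.card_subtype,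
    Fintype.card_subtype] at h
  simp [excess, edgeExcess, sum_sub_distrib, h]

lemma cutSize_eq (X : Set G.V) [DecidablePred (· ∈ X)] :
    cutSize X = #{e | G.tail e ∈ X ∧ G.head e ∉ X} + #{e | G.head e ∈ X ∧ G.tail e ∉ X} := by
  rw [cutSize, Nat.card_eq_fintype_card, Fintype.card_subtype, filter_or,
    card_union_of_disjoint (disjoint_filter.2 fun e _ h h' => h'.1 h.1)]
  simp only [and_comm (a := G.tail _ ∉ X)]

/-- A trail in `F` from a vertex of positive excess can be extended until it stops at a vertex
of negative excess: at any other end, `F` minus the trail still has an edge leaving that end. -/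
lemma exists_isWalk_to_excess_neg {F : Finset G.E} {s t : G.V} {l : List G.E}
    (hs : 0 < excess F s) (hw : IsWalk G.tail G.head s t l) (hnd : l.Nodup)
    (hlF : l.toFinset ⊆ F) :
    ∃ t' l', l' ≠ [] ∧ IsWalk G.tail G.head s t' l' ∧ l'.Nodup ∧ l'.toFinset ⊆ F ∧
      excess F t' < 0 := by
  by_cases hdone : l ≠ [] ∧ excess F t < 0
  · exact ⟨t, l, hdone.1, hw, hnd, hlF, hdone.2⟩
  have hpos : 0 < excess (F \ l.toFinset) t := by
    rw [excess_sdiff hlF, excess_toFinset_of_isWalk hw hnd]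
    rcases eq_or_ne s t with rfl | hst
    · simpa [edgeExcess_self] using hs
    · have hne : l ≠ [] := by rintro rfl; exact hst hw
      have := not_and.1 hdone hne
      simp only [edgeExcess, if_neg hst, if_true]
      omega
  obtain ⟨e, he, het⟩ := exists_tail_eq_of_excess_pos hpos
  have hel : e ∉ l := fun h => (mem_sdiff.1 he).2 (List.mem_toFinset.2 h)
  have hdec : (F \ insert e l.toFinset).card < (F \ l.toFinset).card := by
    rw [sdiff_insert]
    exact card_erase_lt_of_mem he
  exact exists_isWalk_to_excess_neg hs (hw.concat het)
    (List.concat_eq_append ▸ hnd.concat hel)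
    (by simpa [insert_subset_iff, (mem_sdiff.1 he).1] using hlF)
termination_by (F \ l.toFinset).card

/-- In the residual graph of `F`, edges of `F` are traversed backwards and all others forwards. -/
def resSrc (F : Finset G.E) (e : G.E) : G.V := if e ∈ F then G.head e else G.tail e

def resDst (F : Finset G.E) (e : G.E) : G.V := if e ∈ F then G.tail e else G.head e

lemma excess_symmDiff (F S : Finset G.E) (x : G.V) :
    excess (symmDiff F S) x = excess F x + ∑ e ∈ S, edgeExcess (resSrc F e) (resDst F e) x := by
  have hres : ∀ e, edgeExcess (resSrc F e) (resDst F e) x =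
      if e ∈ F then -edgeExcess (G.tail e) (G.head e) x
      else edgeExcess (G.tail e) (G.head e) x := by
    intro e; unfold resSrc resDst; split_ifs
    exacts [edgeExcess_swap _ _ _, rfl]
  have hsum : ∀ (s : Finset G.E) (f : G.E → ℤ), ∑ e ∈ s, f e = ∑ e, if e ∈ s then f e else 0 :=
    fun s f => by rw [sum_ite_mem, univ_inter]
  simp only [excess, hres]
  rw [hsum (symmDiff F S), hsum F, hsum S, ← sum_add_distrib]
  refine sum_congr rfl fun e _ => ?_
  by_cases heF : e ∈ F <;> by_cases heS : e ∈ S <;> simp [heF, heS, mem_symmDiff]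

lemma excess_symmDiff_of_isWalk {F : Finset G.E} {u v : G.V} {w : List G.E}
    (hw : IsWalk (resSrc F) (resDst F) u v w) (hnd : w.Nodup) (x : G.V) :
    excess (symmDiff F w.toFinset) x = excess F x + edgeExcess u v x := by
  rw [excess_symmDiff, List.sum_toFinset _ hnd, hw.sum_edgeExcess]

section Flow

variable {A B : Set G.V} [DecidablePred (· ∈ A)]

variable (A B) in
structure IsFlow (F : Finset G.E) (m : ℕ) : Prop where
  excess_eq_zero : ∀ x, x ∉ A → x ∉ B → excess F x = 0
  excess_nonneg : ∀ x ∈ A, 0 ≤ excess F x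
  excess_nonpos : ∀ x ∈ B, excess F x ≤ 0
  sum_excess_source : ∑ x ∈ univ.filter (· ∈ A), excess F x = m

lemma isFlow_empty : IsFlow A B (∅ : Finset G.E) 0 :=
  ⟨fun _ _ _ => excess_empty _, fun _ _ => (excess_empty _).ge, fun _ _ => (excess_empty _).le,
    by simp [excess_empty]⟩

lemma IsFlow.mem_of_excess_neg {F : Finset G.E} {m : ℕ} (hF : IsFlow A B F m) {x : G.V}
    (hx : excess F x < 0) : x ∈ B := by
  by_contra hB
  by_cases hA : x ∈ A
  · exact (hF.excess_nonneg x hA).not_gt hx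
  · exact hx.ne (hF.excess_eq_zero x hA hB)

lemma IsFlow.of_excess_eq {F F' : Finset G.E} {m m' : ℕ} (hF : IsFlow A B F m)
    (hAB : Disjoint A B) {u v : G.V} (hu : u ∈ A) (hv : v ∈ B) (c : ℤ)
    (hexc : ∀ x, excess F' x = excess F x + c * edgeExcess u v x)
    (hu' : 0 ≤ excess F' u) (hv' : excess F' v ≤ 0) (hm : (m' : ℤ) = m + c) :
    IsFlow A B F' m' := by
  have hvA : v ∉ A := Set.disjoint_right.1 hAB hv
  refine ⟨fun x hxA hxB => ?_, fun x hx => ?_, fun x hx => ?_, ?_⟩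
  · have hux : u ≠ x := fun h => hxA (h ▸ hu)
    have hvx : v ≠ x := fun h => hxB (h ▸ hv)
    simp [hexc, edgeExcess, hux, hvx, hF.excess_eq_zero x hxA hxB]
  · rcases eq_or_ne u x with rfl | hux
    · exact hu'
    · have hvx : v ≠ x := fun h => hvA (h ▸ hx)
      simpa [hexc, edgeExcess, hux, hvx] using hF.excess_nonneg x hx
  · rcases eq_or_ne v x with rfl | hvx
    · exact hv'
    · have hux : u ≠ x := fun h => Set.disjoint_left.1 hAB hu (h ▸ hx)
      simpa [hexc, edgeExcess, hux, hvx] using hF.excess_nonpos x hx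
  · simp only [hexc, sum_add_distrib, ← mul_sum, sum_filter_edgeExcess, hF.sum_excess_source, hm]
    simp [hu, hvA]

lemma IsFlow.augment {F : Finset G.E} {m : ℕ} (hF : IsFlow A B F m) (hAB : Disjoint A B)
    {u v : G.V} (hu : u ∈ A) (hv : v ∈ B) {w : List G.E}
    (hw : IsWalk (resSrc F) (resDst F) u v w) (hnd : w.Nodup) :
    IsFlow A B (symmDiff F w.toFinset) (m + 1) := by
  have huv : u ≠ v := fun h => Set.disjoint_left.1 hAB hu (h ▸ hv)
  have hexc := excess_symmDiff_of_isWalk hw hnd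
  refine hF.of_excess_eq hAB hu hv 1 (by simpa using hexc) ?_ ?_ (by push_cast; ring)
  · have := hF.excess_nonneg u hu
    simp [hexc, edgeExcess, huv.symm]
    omega
  · have := hF.excess_nonpos v hv
    simp [hexc, edgeExcess, huv]
    omega

/-- Without an augmenting path, the vertices reachable from `A` in the residual graph form a
cut: `F` uses every edge leaving it and no edge entering it, so `m` edges leave it, and as many
enter it because `G` is Eulerian. -/
lemma IsFlow.exists_cut {F : Finset G.E} {m : ℕ} (hF : IsFlow A B F m) (hG : G.Eulerian)
    (hno : ∀ u ∈ A, ∀ v ∈ B, ∀ w, ¬ IsWalk (resSrc F) (resDst F) u v w) :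
    ∃ X : Set G.V, A ⊆ X ∧ B ⊆ Xᶜ ∧ cutSize X = 2 * m := by
  classical
  set X : Set G.V := {x | ∃ u ∈ A, ∃ w, IsWalk (resSrc F) (resDst F) u x w}
  have hAX : A ⊆ X := fun u hu => ⟨u, hu, [], rfl⟩
  have hBX : B ⊆ Xᶜ := fun v hv ⟨u, hu, w, hw⟩ => hno u hu v hv w hw
  have hstep : ∀ e, resSrc F e ∈ X → resDst F e ∈ X := fun e ⟨u, hu, w, hw⟩ =>
    ⟨u, hu, w ++ [e], hw.concat rfl⟩
  have hout : ∀ e, G.tail e ∈ X ∧ G.head e ∉ X → e ∈ F := fun e ⟨ht, hh⟩ => by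
    by_contra he
    exact hh (by simpa [resSrc, resDst, he] using hstep e (by simpa [resSrc, he] using ht))
  have hin : ∀ e ∈ F, ¬ (G.head e ∈ X ∧ G.tail e ∉ X) := fun e he ⟨hh, ht⟩ =>
    ht (by simpa [resSrc, resDst, he] using hstep e (by simpa [resSrc, he] using hh))
  have hvalue : ∑ x ∈ univ.filter (· ∈ X), excess F x = m := by
    rw [← hF.sum_excess_source]
    refine (sum_subset (fun x => by simpa using @hAX x) fun x hxX hxA => ?_).symm
    simp only [mem_filter, mem_univ, true_and] at hxX hxA
    exact hF.excess_eq_zero x hxA fun hxB => hBX hxB hxX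
  have hF_cut := sum_filter_excess F X
  have huniv_cut := sum_filter_excess univ X
  have hF_out : F.filter (fun e => G.tail e ∈ X ∧ G.head e ∉ X) =
      univ.filter (fun e => G.tail e ∈ X ∧ G.head e ∉ X) := by
    ext e
    simp only [mem_filter, mem_univ, true_and]
    exact ⟨And.right, fun h => ⟨hout e h, h⟩⟩
  rw [hvalue, hF_out, filter_false_of_mem hin] at hF_cut
  rw [sum_eq_zero fun x _ => hG.excess_univ x] at huniv_cut
  refine ⟨X, hAX, hBX, ?_⟩
  rw [cutSize_eq]
  simp only [card_empty, Nat.cast_zero, sub_zero] at hF_cut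
  omega

lemma exists_flow_or_cut (hG : G.Eulerian) (hAB : Disjoint A B) (m : ℕ) :
    (∃ F, IsFlow A B F m) ∨ ∃ X : Set G.V, A ⊆ X ∧ B ⊆ Xᶜ ∧ cutSize X < 2 * m := by
  induction m with
  | zero => exact Or.inl ⟨∅, isFlow_empty⟩
  | succ m ih =>
    rcases ih with ⟨F, hF⟩ | ⟨X, hAX, hBX, hX⟩
    · by_cases hpath : ∃ u ∈ A, ∃ v ∈ B, ∃ w, IsWalk (resSrc F) (resDst F) u v w
      · obtain ⟨u, hu, v, hv, w, hw⟩ := hpath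
        obtain ⟨w', hw', hnd⟩ := hw.exists_nodup
        exact Or.inl ⟨_, hF.augment hAB hu hv hw' hnd⟩
      · push Not at hpath
        obtain ⟨X, hAX, hBX, hX⟩ := hF.exists_cut hG hpath
        exact Or.inr ⟨X, hAX, hBX, by omega⟩
    · exact Or.inr ⟨X, hAX, hBX, by omega⟩

lemma IsFlow.exists_trails (hAB : Disjoint A B) {m : ℕ} {F : Finset G.E} (hF : IsFlow A B F m) :
    ∃ T : Fin m → G.Trail, (∀ i, (T i).first ∈ A ∧ (T i).last ∈ B) ∧
      (∀ i, (T i).edges.toFinset ⊆ F) ∧ Pairwise (List.Disjoint on fun i => (T i).edges) := by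
  induction m generalizing F with
  | zero => exact ⟨Fin.elim0, fun i => i.elim0, fun i => i.elim0, fun i => i.elim0⟩
  | succ m ih =>
    obtain ⟨s, hs, hspos⟩ : ∃ s ∈ univ.filter (· ∈ A), (0 : ℤ) < excess F s :=
      exists_lt_of_sum_lt (by rw [hF.sum_excess_source, sum_const_zero]; positivity)
    have hsA : s ∈ A := (mem_filter.1 hs).2
    obtain ⟨t, l, hne, hw, hnd, hlF, htneg⟩ :=
      exists_isWalk_to_excess_neg hspos (l := []) rfl List.nodup_nil (by simp)
    have htB := hF.mem_of_excess_neg htneg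
    have hst : s ≠ t := fun h => Set.disjoint_left.1 hAB hsA (h ▸ htB)
    have hexc : ∀ x, excess (F \ l.toFinset) x = excess F x + -1 * edgeExcess s t x := fun x => by
      rw [excess_sdiff hlF, excess_toFinset_of_isWalk hw hnd]; ring
    have hF' : IsFlow A B (F \ l.toFinset) m := by
      refine hF.of_excess_eq hAB hsA htB (-1) hexc ?_ ?_ (by push_cast; ring)
      · simp only [hexc, edgeExcess, if_neg hst.symm, if_true]; omega
      · simp only [hexc, edgeExcess, if_neg hst, if_true]; omega
    obtain ⟨T, hTends, hTF, hTdisj⟩ := ih hF'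
    have hτT : ∀ i, l.Disjoint (T i).edges := fun i e hel heT =>
      (mem_sdiff.1 (hTF i (List.mem_toFinset.2 heT))).2 (List.mem_toFinset.2 hel)
    refine ⟨Fin.cons (Trail.ofIsWalk hne hw hnd) T, Fin.cases ?_ hTends,
      Fin.cases hlF fun i => (hTF i).trans sdiff_subset,
      Fin.pairwise_cons_of_symmetric (r := List.Disjoint on Trail.edges) (fun _ _ h => h.symm)
        hτT hTdisj⟩
    simp only [Fin.cons_zero, Trail.ofIsWalk_first, Trail.ofIsWalk_last]
    exact ⟨hsA, htB⟩

lemma IsFlow.sum_excess_sink [DecidablePred (· ∈ B)] (hAB : Disjoint A B) {F : Finset G.E}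
    {m : ℕ} (hF : IsFlow A B F m) : ∑ x ∈ univ.filter (· ∈ B), excess F x = -m := by
  have hsplit : ∀ x, excess F x =
      (if x ∈ A then excess F x else 0) + (if x ∈ B then excess F x else 0) := by
    intro x
    by_cases hA : x ∈ A
    · simp [hA, Set.disjoint_left.1 hAB hA]
    · by_cases hB : x ∈ B
      · simp [hA, hB]
      · simp [hA, hB, hF.excess_eq_zero x hA hB]
  have htotal := sum_excess_eq_zero F
  rw [sum_congr rfl fun x _ => hsplit x, sum_add_distrib, ← sum_filter, ← sum_filter,
    hF.sum_excess_source] at htotal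
  omega

lemma IsFlow.compl [DecidablePred (· ∈ B)] (hG : G.Eulerian) (hAB : Disjoint A B)
    {F : Finset G.E} {m : ℕ} (hF : IsFlow A B F m) : IsFlow B A (univ \ F) m := by
  have hexc : ∀ x, excess (univ \ F) x = -excess F x := fun x => by
    rw [excess_sdiff (subset_univ F), hG.excess_univ]; ring
  refine ⟨fun x hB hA => ?_, fun x hx => ?_, fun x hx => ?_, ?_⟩
  · rw [hexc, hF.excess_eq_zero x hA hB, neg_zero]
  · rw [hexc]; exact neg_nonneg.2 (hF.excess_nonpos x hx)
  · rw [hexc]; exact neg_nonpos.2 (hF.excess_nonneg x hx)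
  · simp only [hexc, sum_neg_distrib, hF.sum_excess_sink hAB, neg_neg]

end Flow

end MDigraph

open MDigraph in
theorem stmt2 (G : MDigraph) (hG : G.Eulerian) (X₁ X₂ : Set G.V)
    (hdisj : Disjoint X₁ X₂) (k : ℕ) :
    (∃ P Q : Fin k → G.Trail,
        (∀ i, (P i).first ∈ X₁ ∧ (P i).last ∈ X₂) ∧
        (∀ i, (Q i).first ∈ X₂ ∧ (Q i).last ∈ X₁) ∧
        (∀ i j, i ≠ j → (P i).edges.Disjoint (P j).edges) ∧
        (∀ i j, i ≠ j → (Q i).edges.Disjoint (Q j).edges) ∧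
        (∀ i j, (P i).edges.Disjoint (Q j).edges)) ∨
      (∃ X : Set G.V, X₁ ⊆ X ∧ X₂ ⊆ Xᶜ ∧
        Nat.card {e : G.E //
          (G.tail e ∈ X ∧ G.head e ∉ X) ∨ (G.tail e ∉ X ∧ G.head e ∈ X)} < 2 * k) := by
  classical
  rcases exists_flow_or_cut hG hdisj k with ⟨F, hF⟩ | hcut
  · obtain ⟨P, hPends, hPF, hPdisj⟩ := hF.exists_trails hdisj
    obtain ⟨Q, hQends, hQF, hQdisj⟩ := (hF.compl hG hdisj).exists_trails hdisj.symm
    refine Or.inl ⟨P, Q, hPends, hQends, fun i j h => hPdisj h, fun i j h => hQdisj h,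
      fun i j e hP hQ => ?_⟩
    exact (mem_sdiff.1 (hQF j (List.mem_toFinset.2 hQ))).2 (hPF i (List.mem_toFinset.2 hP))
  · exact Or.inr hcut
end

section
/- Strong immersion defines a partial order on (isomorphism classes of) Eulerian digraphs: it is reflexive and transitive, and if G strongly immerses H and H strongly immerses G, then G and H are isomorphic. -/
/-- An immersion of `H` into `G`: vertices map injectively to vertices, edges map to
pairwise edge-disjoint directed trails respecting heads and tails. -/
structure MDigraph.Immersion (H G : MDigraph) : Type where
  vmap : H.V → G.V
  vinj : Function.Injective vmap
  emap : H.E → G.Trail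
  first_eq : ∀ e : H.E, (emap e).first = vmap (H.tail e)
  last_eq : ∀ e : H.E, (emap e).last = vmap (H.head e)
  edisj : ∀ e f : H.E, e ≠ f → (emap e).edges.Disjoint (emap f).edges

/-- A strong immersion: moreover no image vertex occurs as an internal vertex
of any assigned trail. -/
structure MDigraph.StrongImmersion (H G : MDigraph) extends MDigraph.Immersion H G where
  strong : ∀ (e : H.E) (v : H.V), vmap v ∉ (emap e).internals

/-- An isomorphism of directed multigraphs. -/
structure MDigraph.Iso (G H : MDigraph) : Type where
  vequiv : G.V ≃ H.V
  eequiv : G.E ≃ H.E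
  tail_eq : ∀ e : G.E, H.tail (eequiv e) = vequiv (G.tail e)
  head_eq : ∀ e : G.E, H.head (eequiv e) = vequiv (G.head e)

/-! Reflexivity is witnessed by the identity with one-edge trails. Immersions compose by
replacing every edge of an assigned trail by the trail assigned to that edge; an internal
vertex of the composite trail is either internal to one of the substituted trails or the
image of an internal vertex of the original trail, and strongness excludes branch vertices
in both cases. Immersions in both directions force equal numbers of vertices and of edges;
as the assigned trails are nonempty and pairwise edge-disjoint, each is then a single edge,
so the vertex map and the first-edge map are bijections respecting heads and tails. -/

namespace MDigraph

namespace Trail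

variable {G : MDigraph}

def single (e : G.E) : G.Trail where
  edges := [e]
  nonempty := List.cons_ne_nil e []
  chain := List.isChain_singleton e
  nodup := List.nodup_singleton e

lemma head_mem_internals_or_eq_last (t : G.Trail) {g : G.E} (hg : g ∈ t.edges) :
    G.head g ∈ t.internals ∨ G.head g = t.last := by
  rw [← List.dropLast_append_getLast t.nonempty, List.mem_append, List.mem_singleton] at hg
  rcases hg with hg | rfl
  · exact Or.inl (List.mem_map_of_mem hg)
  · exact Or.inr rfl

lemma last_eq_head_of_length_eq_one (t : G.Trail) (h : t.edges.length = 1) :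
    t.last = G.head (t.edges.head t.nonempty) := by
  obtain ⟨a, ha⟩ := List.length_eq_one_iff.1 h
  simp only [last, ha, List.getLast_singleton, List.head_cons]

end Trail

namespace Immersion

variable {G₁ G₂ G₃ : MDigraph}

def refl (G : MDigraph) : G.Immersion G where
  vmap := id
  vinj := Function.injective_id
  emap := Trail.single
  first_eq _ := rfl
  last_eq _ := rfl
  edisj _ _ hne := List.disjoint_singleton.2 fun h => hne (List.mem_singleton.1 h).symm

def mapTrail (ψ : G₂.Immersion G₃) (t : G₂.Trail) : G₃.Trail where
  edges := (t.edges.map fun f => (ψ.emap f).edges).flatten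
  nonempty := List.flatten_ne_nil_iff.2
    ⟨_, List.mem_map_of_mem (List.head_mem t.nonempty), (ψ.emap _).nonempty⟩
  chain := by
    have hpieces : [] ∉ t.edges.map fun f => (ψ.emap f).edges := by
      simp only [List.mem_map, not_exists, not_and]
      exact fun f _ h => (ψ.emap f).nonempty h
    change List.IsChain _ _
    rw [List.isChain_flatten hpieces, List.isChain_map]
    refine ⟨?_, t.chain.imp fun f f' hff' x hx y hy => ?_⟩
    · simp only [List.mem_map]
      rintro _ ⟨f, -, rfl⟩
      exact (ψ.emap f).chain
    · obtain ⟨-, rfl⟩ := List.mem_getLast?_eq_getLast hx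
      rw [List.head?_eq_some_head (ψ.emap f').nonempty, Option.mem_some_iff] at hy
      subst hy
      change (ψ.emap f).last = (ψ.emap f').first
      rw [ψ.last_eq, ψ.first_eq, hff']
  nodup := by
    refine List.nodup_flatten.2
      ⟨?_, List.Pairwise.map _ (fun f f' h => ψ.edisj f f' h) t.nodup⟩
    simp only [List.mem_map]
    rintro _ ⟨f, -, rfl⟩
    exact (ψ.emap f).nodup

variable (ψ : G₂.Immersion G₃) (t : G₂.Trail)

lemma mapTrail_edges : (ψ.mapTrail t).edges = (t.edges.map fun f => (ψ.emap f).edges).flatten :=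
  rfl

lemma mapTrail_first : (ψ.mapTrail t).first = ψ.vmap t.first := by
  simp only [Trail.first, mapTrail_edges]
  rw [List.head_flatten_eq_head_head _ (by simpa using (ψ.emap _).nonempty)]
  simp only [List.head_map]
  exact ψ.first_eq _

lemma mapTrail_last : (ψ.mapTrail t).last = ψ.vmap t.last := by
  simp only [Trail.last, mapTrail_edges]
  rw [List.getLast_flatten_eq_getLast_getLast _ (by simpa using (ψ.emap _).nonempty)]
  simp only [List.getLast_map]
  exact ψ.last_eq _

lemma mem_internals_mapTrail {x : G₃.V} (hx : x ∈ (ψ.mapTrail t).internals) :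
    (∃ f ∈ t.edges, x ∈ (ψ.emap f).internals) ∨ ∃ v ∈ t.internals, x = ψ.vmap v := by
  have hsplit : (ψ.mapTrail t).edges.dropLast =
      (t.edges.dropLast.map fun f => (ψ.emap f).edges).flatten ++
        (ψ.emap (t.edges.getLast t.nonempty)).edges.dropLast := by
    rw [← List.dropLast_append_of_ne_nil (ψ.emap _).nonempty]
    conv_lhs => rw [mapTrail_edges, ← List.dropLast_append_getLast t.nonempty]
    simp only [List.map_append, List.flatten_append, List.map_cons, List.map_nil,
      List.flatten_cons, List.flatten_nil, List.append_nil]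
  obtain ⟨g, hg, rfl⟩ := List.mem_map.1 hx
  rw [hsplit, List.mem_append, List.mem_flatten] at hg
  rcases hg with ⟨_, hpiece, hg⟩ | hg
  · obtain ⟨f, hf, rfl⟩ := List.mem_map.1 hpiece
    rcases (ψ.emap f).head_mem_internals_or_eq_last hg with hint | hlast
    · exact Or.inl ⟨f, List.dropLast_subset _ hf, hint⟩
    · exact Or.inr ⟨G₂.head f, List.mem_map_of_mem hf, hlast.trans (ψ.last_eq f)⟩
  · exact Or.inl ⟨_, List.getLast_mem t.nonempty, List.mem_map_of_mem hg⟩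

def trans (φ : G₁.Immersion G₂) (ψ : G₂.Immersion G₃) : G₁.Immersion G₃ where
  vmap := ψ.vmap ∘ φ.vmap
  vinj := ψ.vinj.comp φ.vinj
  emap e := ψ.mapTrail (φ.emap e)
  first_eq e := by rw [mapTrail_first, φ.first_eq]; rfl
  last_eq e := by rw [mapTrail_last, φ.last_eq]; rfl
  edisj e e' hne g hg hg' := by
    simp only [mapTrail_edges, List.mem_flatten, List.mem_map] at hg hg'
    obtain ⟨_, ⟨f, hf, rfl⟩, hgf⟩ := hg
    obtain ⟨_, ⟨f', hf', rfl⟩, hgf'⟩ := hg'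
    rcases eq_or_ne f f' with rfl | hff'
    · exact φ.edisj e e' hne hf hf'
    · exact ψ.edisj f f' hff' hgf hgf'

variable {H G : MDigraph} (φ : H.Immersion G)

def firstEdge (e : H.E) : G.E :=
  (φ.emap e).edges.head (φ.emap e).nonempty

lemma firstEdge_injective : Function.Injective φ.firstEdge := by
  intro e e' h
  by_contra hne
  refine φ.edisj e e' hne (List.head_mem (φ.emap e).nonempty) ?_
  rw [firstEdge] at h
  exact h ▸ List.head_mem _

lemma card_V_le (φ : H.Immersion G) : Fintype.card H.V ≤ Fintype.card G.V :=
  Fintype.card_le_of_injective _ φ.vinj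

lemma card_E_le (φ : H.Immersion G) : Fintype.card H.E ≤ Fintype.card G.E :=
  Fintype.card_le_of_injective _ φ.firstEdge_injective

lemma sum_length_le_card : ∑ e, (φ.emap e).edges.length ≤ Fintype.card G.E := by
  have hinj : Function.Injective fun p : Σ e, Fin (φ.emap e).edges.length =>
      (φ.emap p.1).edges.get p.2 := by
    rintro ⟨e, i⟩ ⟨e', j⟩ (h : (φ.emap e).edges.get i = (φ.emap e').edges.get j)
    rcases eq_or_ne e e' with rfl | hne
    · rw [(φ.emap e).nodup.get_inj_iff.1 h]
    · exact (φ.edisj e e' hne (List.get_mem _ i) (h ▸ List.get_mem _ j)).elim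
  simpa only [Fintype.card_sigma, Fintype.card_fin] using Fintype.card_le_of_injective _ hinj

lemma length_emap_eq_one (hE : Fintype.card G.E ≤ Fintype.card H.E) (e : H.E) :
    (φ.emap e).edges.length = 1 := by
  have hpos (e : H.E) : 1 ≤ (φ.emap e).edges.length :=
    List.length_pos_iff.2 (φ.emap e).nonempty
  have hsum : ∑ _e : H.E, 1 = ∑ e, (φ.emap e).edges.length := by
    refine le_antisymm (Finset.sum_le_sum fun e _ => hpos e) ?_
    simpa using φ.sum_length_le_card.trans hE
  exact ((Finset.sum_eq_sum_iff_of_le fun e _ => hpos e).1 hsum e (Finset.mem_univ e)).symm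

noncomputable def toIso (hV : Fintype.card G.V ≤ Fintype.card H.V)
    (hE : Fintype.card G.E ≤ Fintype.card H.E) : H.Iso G where
  vequiv := Equiv.ofBijective φ.vmap
    ((Fintype.bijective_iff_injective_and_card _).2 ⟨φ.vinj, φ.card_V_le.antisymm hV⟩)
  eequiv := Equiv.ofBijective φ.firstEdge ((Fintype.bijective_iff_injective_and_card _).2
    ⟨φ.firstEdge_injective, φ.card_E_le.antisymm hE⟩)
  tail_eq e := φ.first_eq e
  head_eq e := by
    rw [Equiv.ofBijective_apply, Equiv.ofBijective_apply, ← φ.last_eq,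
      Trail.last_eq_head_of_length_eq_one _ (φ.length_emap_eq_one hE e)]
    rfl

end Immersion

namespace StrongImmersion

variable {G₁ G₂ G₃ : MDigraph}

def refl (G : MDigraph) : G.StrongImmersion G where
  toImmersion := .refl G
  strong _ _ := List.not_mem_nil

def trans (φ : G₁.StrongImmersion G₂) (ψ : G₂.StrongImmersion G₃) :
    G₁.StrongImmersion G₃ where
  toImmersion := φ.toImmersion.trans ψ.toImmersion
  strong e v hv := by
    rcases ψ.mem_internals_mapTrail (φ.emap e) hv with ⟨f, -, hint⟩ | ⟨w, hw, hvw⟩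
    · exact ψ.strong f (φ.vmap v) hint
    · exact φ.strong e v (ψ.vinj hvw ▸ hw)

end StrongImmersion

end MDigraph

theorem stmt7 :
    (∀ G : MDigraph, G.Eulerian → Nonempty (MDigraph.StrongImmersion G G)) ∧
      (∀ G₁ G₂ G₃ : MDigraph, G₁.Eulerian → G₂.Eulerian → G₃.Eulerian →
        Nonempty (MDigraph.StrongImmersion G₁ G₂) →
        Nonempty (MDigraph.StrongImmersion G₂ G₃) →
        Nonempty (MDigraph.StrongImmersion G₁ G₃)) ∧
      (∀ G₁ G₂ : MDigraph, G₁.Eulerian → G₂.Eulerian →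
        Nonempty (MDigraph.StrongImmersion G₁ G₂) →
        Nonempty (MDigraph.StrongImmersion G₂ G₁) →
        Nonempty (MDigraph.Iso G₁ G₂)) :=
  ⟨fun G _ => ⟨.refl G⟩,
    fun _ _ _ _ _ _ ⟨φ⟩ ⟨ψ⟩ => ⟨φ.trans ψ⟩,
    fun _ _ _ _ ⟨φ⟩ ⟨ψ⟩ => ⟨φ.toIso ψ.card_V_le ψ.card_E_le⟩⟩
end

section
/- The class of Eulerian digraphs is not well-quasi-ordered by the strong immersion relation: there exists an infinite family (G′_k) of pairwise non-isomorphic Eulerian digraphs such that for all i ≠ j, G′_i does not strongly immerse into G′_j. -/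
/-!
Take the alternating path `0 → 1 ← 2 → 3 ← ⋯ ← 2k` and add a hub joined to the path by arcs that
balance all degrees; the hub gets in-degree `2k + 4`, the two ends of the path in-degree `3` and the
other path vertices in-degree `2`. An immersion cannot decrease in-degrees, so an immersion of the
`i`-th digraph into the `j`-th maps hub to hub and ends of the path to ends of the path. In a strong
immersion the hub is then internal to no trail, and since no two arcs of an alternating path are
consecutive, every path arc is sent to a single path arc. Hence the `2i + 1` path vertices are
mapped injectively, one step at a time, onto the other path, from one end to the other: `i = j`.
-/

open Finset

namespace MDigraph

noncomputable def inDeg (G : MDigraph) (v : G.V) : ℕ := Nat.card {e : G.E // G.head e = v}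

noncomputable def outDeg (G : MDigraph) (v : G.V) : ℕ := Nat.card {e : G.E // G.tail e = v}

theorem Trail.first_last_of_edges_eq_singleton {G : MDigraph} {t : G.Trail} {e : G.E}
    (h : t.edges = [e]) : t.first = G.tail e ∧ t.last = G.head e := by
  obtain ⟨edges, _, _, _⟩ := t
  subst h
  exact ⟨rfl, rfl⟩

theorem Trail.exists_edges_eq_singleton {G : MDigraph} (t : G.Trail) (A : Set G.V)
    (hA : ∀ e f : G.E, G.head e = G.tail f → G.tail e ∈ A → G.head e ∈ A → G.head f ∉ A)
    (hfirst : t.first ∈ A) (hlast : t.last ∈ A) (hinternal : ∀ v ∈ t.internals, v ∈ A) :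
    ∃ e, t.edges = [e] := by
  cases t with | mk edges hne hchain _ =>
  rcases edges with _ | ⟨e, _ | ⟨f, r⟩⟩
  · exact absurd rfl hne
  · exact ⟨e, rfl⟩
  · simp only [internals, List.dropLast_cons_cons, List.map_cons, List.mem_cons] at hinternal
    refine absurd ?_ (hA e f (List.isChain_cons_cons.mp hchain).1 hfirst (hinternal _ (.inl rfl)))
    rcases r with _ | ⟨g, r⟩
    · exact hlast
    · exact hinternal _ (.inr (by simp))

theorem Immersion.inDeg_le {H G : MDigraph} (S : H.Immersion G) (v : H.V) :
    H.inDeg v ≤ G.inDeg (S.vmap v) := by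
  refine Nat.card_le_card_of_injective
    (fun e => ⟨(S.emap e.1).edges.getLast (S.emap e.1).nonempty, by
      rw [← Trail.last, S.last_eq, e.2]⟩) ?_
  intro ⟨e, _⟩ ⟨f, _⟩ h
  simp only [Subtype.mk.injEq] at h ⊢
  by_contra hne
  exact S.edisj e f hne (List.getLast_mem _) (by rw [h]; exact List.getLast_mem _)

theorem StrongImmersion.exists_edge {H G : MDigraph} (S : H.StrongImmersion G) (A : Set G.V)
    (hA : ∀ e f : G.E, G.head e = G.tail f → G.tail e ∈ A → G.head e ∈ A → G.head f ∉ A)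
    (hcompl : ∀ v ∉ A, v ∈ Set.range S.vmap) (e : H.E)
    (htail : S.vmap (H.tail e) ∈ A) (hhead : S.vmap (H.head e) ∈ A) :
    ∃ e' : G.E, G.tail e' = S.vmap (H.tail e) ∧ G.head e' = S.vmap (H.head e) := by
  obtain ⟨e', he'⟩ := (S.emap e).exists_edges_eq_singleton A hA (S.first_eq e ▸ htail)
    (S.last_eq e ▸ hhead) fun v hv => by
      by_contra hvA
      obtain ⟨u, rfl⟩ := hcompl v hvA
      exact S.strong e u hv
  obtain ⟨hfirst, hlast⟩ := Trail.first_last_of_edges_eq_singleton he'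
  exact ⟨e', hfirst ▸ S.first_eq e, hlast ▸ S.last_eq e⟩

section OfMult

variable {V : Type} [Fintype V] [DecidableEq V]

abbrev ofMult (m : V → V → ℕ) : MDigraph where
  V := V
  E := Σ u v : V, Fin (m u v)
  tail e := e.1
  head e := e.2.1

theorem inDeg_ofMult (m : V → V → ℕ) (v : V) : (ofMult m).inDeg v = ∑ u, m u v := by
  unfold inDeg
  rw [Nat.card_eq_fintype_card, Fintype.card_subtype]
  simp only [card_filter, Fintype.sum_sigma]
  simp [apply_ite]

theorem outDeg_ofMult (m : V → V → ℕ) (u : V) : (ofMult m).outDeg u = ∑ v, m u v := by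
  unfold outDeg
  rw [Nat.card_eq_fintype_card, Fintype.card_subtype]
  simp only [card_filter, Fintype.sum_sigma]
  simp [apply_ite]

/-- Both degree sums count every arc once, so balance at all vertices but one forces balance at the
last. -/
theorem ofMult_eulerian (m : V → V → ℕ) (w : V) (h : ∀ v ≠ w, ∑ u, m u v = ∑ u, m v u) :
    (ofMult m).Eulerian := by
  intro v
  change (ofMult m).inDeg v = (ofMult m).outDeg v
  rw [inDeg_ofMult, outDeg_ofMult]
  rcases eq_or_ne v w with rfl | hv
  · have htotal : ∑ v, ∑ u, m u v = ∑ u, ∑ v, m u v := sum_comm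
    have hrest : ∑ x ∈ univ.erase v, ∑ u, m u x = ∑ x ∈ univ.erase v, ∑ u, m x u :=
      sum_congr rfl fun x hx => h x (ne_of_mem_erase hx)
    rw [← add_sum_erase univ (fun x => ∑ u, m u x) (mem_univ v),
      ← add_sum_erase univ (fun x => ∑ u, m x u) (mem_univ v), hrest] at htotal
    exact Nat.add_right_cancel htotal
  · exact h v hv

end OfMult

end MDigraph

theorem sum_fin_boole_eq_of_iff {n c : ℕ} {p : Prop} [Decidable p] {q : ℕ → Prop}
    [DecidablePred q] (h : ∀ x, q x ↔ p ∧ x = c) :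
    (∑ x : Fin n, if q x then 1 else 0) = if p ∧ c < n then 1 else 0 := by
  rw [Fin.sum_univ_eq_sum_range (fun x => if q x then 1 else 0)]
  simp only [h]
  by_cases hp : p <;> simp [hp]

theorem end_eq_of_unit_steps {f : ℕ → ℕ} {n : ℕ}
    (hstep : ∀ m < n, f (m + 1) = f m + 1 ∨ f m = f (m + 1) + 1)
    (hback : ∀ m, m + 2 ≤ n → f (m + 2) ≠ f m) :
    f n = f 0 + n ∨ f 0 = f n + n := by
  obtain _ | n := n
  · simp
  have hmono : ∀ m ≤ n, (f m = f 0 + m ∧ f (m + 1) = f 0 + (m + 1)) ∨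
      (f 0 = f m + m ∧ f 0 = f (m + 1) + (m + 1)) := by
    intro m hm
    induction m with
    | zero => have := hstep 0 (by omega); omega
    | succ m ih =>
      have := ih (by omega)
      have := hstep (m + 1) (by omega)
      have : f (m + 1 + 1) ≠ f m := hback m (by omega)
      omega
  have := hmono n le_rfl
  omega

/-- The multiplicities of the `k`-th digraph: `some a` is the vertex `a` of the alternating path
`0 → 1 ← 2 → 3 ← ⋯ ← 2k` and `none` is a hub, whose arcs balance all degrees and give the two ends
of the path in-degree `3` while every other path vertex has in-degree `2`. -/
def altPathMult (k : ℕ) : Option (Fin (2 * k + 1)) → Option (Fin (2 * k + 1)) → ℕ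
  | some a, some b =>
      (if a.val % 2 = 0 ∧ b.val = a.val + 1 then 1 else 0) +
        (if a.val % 2 = 0 ∧ a.val = b.val + 1 then 1 else 0)
  | none, some b => if b.val = 0 ∨ b.val = 2 * k then 3 else if b.val % 2 = 0 then 2 else 0
  | some a, none => if a.val = 0 ∨ a.val = 2 * k then 2 else if a.val % 2 = 0 then 0 else 2
  | none, none => 0

abbrev altPathDigraph (k : ℕ) : MDigraph := MDigraph.ofMult (altPathMult k)

section AltPath

variable {k i j : ℕ}

theorem sum_altPathMult_some_left (b : Fin (2 * k + 1)) :
    ∑ a, altPathMult k (some a) (some b) = if b.val % 2 = 1 then 2 else 0 := by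
  simp only [altPathMult, sum_add_distrib]
  rw [sum_fin_boole_eq_of_iff (q := fun x => x % 2 = 0 ∧ b.val = x + 1)
      (p := b.val % 2 = 1 ∧ 1 ≤ b.val) (c := b.val - 1) (by omega),
    sum_fin_boole_eq_of_iff (q := fun x => x % 2 = 0 ∧ x = b.val + 1)
      (p := b.val % 2 = 1) (c := b.val + 1) (by omega)]
  have := b.isLt
  split_ifs <;> omega

theorem sum_altPathMult_some_right (hk : 0 < k) (a : Fin (2 * k + 1)) :
    ∑ b, altPathMult k (some a) (some b) =
      if a.val % 2 = 1 then 0 else if a.val = 0 ∨ a.val = 2 * k then 1 else 2 := by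
  simp only [altPathMult, sum_add_distrib]
  rw [sum_fin_boole_eq_of_iff (q := fun x => a.val % 2 = 0 ∧ x = a.val + 1)
      (p := a.val % 2 = 0) (c := a.val + 1) (by omega),
    sum_fin_boole_eq_of_iff (q := fun x => a.val % 2 = 0 ∧ a.val = x + 1)
      (p := a.val % 2 = 0 ∧ 1 ≤ a.val) (c := a.val - 1) (by omega)]
  have := a.isLt
  split_ifs <;> omega

theorem altPathDigraph_inDeg_some (b : Fin (2 * k + 1)) :
    (altPathDigraph k).inDeg (some b) = if b.val = 0 ∨ b.val = 2 * k then 3 else 2 := by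
  rw [MDigraph.inDeg_ofMult, Fintype.sum_option, sum_altPathMult_some_left]
  simp only [altPathMult]
  split_ifs <;> omega

theorem four_le_altPathDigraph_inDeg_none (hk : 0 < k) : 4 ≤ (altPathDigraph k).inDeg none := by
  rw [MDigraph.inDeg_ofMult, Fintype.sum_option]
  calc 4 = ∑ a ∈ {0, Fin.last (2 * k)}, altPathMult k (some a) none := by
          rw [sum_pair (by simp [Fin.ext_iff]; omega)]; simp [altPathMult]
    _ ≤ ∑ a, altPathMult k (some a) none := sum_le_univ_sum_of_nonneg (fun _ => Nat.zero_le _)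
    _ ≤ _ := Nat.le_add_left _ _

theorem altPathDigraph_eulerian (hk : 0 < k) : (altPathDigraph k).Eulerian := by
  refine MDigraph.ofMult_eulerian _ none fun v hv => ?_
  obtain ⟨b, rfl⟩ := Option.ne_none_iff_exists'.mp hv
  rw [Fintype.sum_option, Fintype.sum_option, sum_altPathMult_some_left,
    sum_altPathMult_some_right hk]
  have := b.isLt
  simp only [altPathMult]
  split_ifs <;> omega

theorem altPathMult_pos_some {a b : Fin (2 * k + 1)} (h : 0 < altPathMult k (some a) (some b)) :
    a.val % 2 = 0 ∧ (b.val = a.val + 1 ∨ a.val = b.val + 1) := by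
  simp only [altPathMult] at h
  split_ifs at h <;> omega

theorem altPathDigraph_head_eq_none {e f : (altPathDigraph k).E}
    (hef : (altPathDigraph k).head e = (altPathDigraph k).tail f)
    (htail : (altPathDigraph k).tail e ≠ none) (hhead : (altPathDigraph k).head e ≠ none) :
    (altPathDigraph k).head f = none := by
  obtain ⟨_ | u, _ | v, c⟩ := e <;> obtain ⟨_ | v', _ | w, c'⟩ := f <;>
    simp only [ne_eq, not_true_eq_false, reduceCtorEq, Option.some.injEq] at hef htail hhead ⊢
  subst hef
  have := altPathMult_pos_some c.pos
  have := altPathMult_pos_some c'.pos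
  omega

theorem altPathDigraph_exists_edge {a b : Fin (2 * k + 1)} (hab : b.val = a.val + 1) :
    ∃ e : (altPathDigraph k).E,
      ((altPathDigraph k).tail e = some a ∧ (altPathDigraph k).head e = some b) ∨
        ((altPathDigraph k).tail e = some b ∧ (altPathDigraph k).head e = some a) := by
  by_cases ha : a.val % 2 = 0
  · exact ⟨⟨some a, some b, ⟨0, by simp only [altPathMult]; split_ifs <;> omega⟩⟩, .inl ⟨rfl, rfl⟩⟩
  · exact ⟨⟨some b, some a, ⟨0, by simp only [altPathMult]; split_ifs <;> omega⟩⟩, .inr ⟨rfl, rfl⟩⟩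

theorem altPathDigraph_vmap_none (hi : 0 < i)
    (S : (altPathDigraph i).Immersion (altPathDigraph j)) : S.vmap none = none := by
  cases hb : S.vmap none with
  | none => rfl
  | some b =>
    have := S.inDeg_le none
    rw [hb, altPathDigraph_inDeg_some] at this
    have := four_le_altPathDigraph_inDeg_none hi
    split_ifs at * <;> omega

theorem altPathDigraph_vmap_end (S : (altPathDigraph i).Immersion (altPathDigraph j))
    {a : Fin (2 * i + 1)} (ha : a.val = 0 ∨ a.val = 2 * i) {b : Fin (2 * j + 1)}
    (hb : S.vmap (some a) = some b) : b.val = 0 ∨ b.val = 2 * j := by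
  have := S.inDeg_le (some a)
  rw [hb, altPathDigraph_inDeg_some, altPathDigraph_inDeg_some, if_pos ha] at this
  split_ifs at this with h
  · exact h
  · omega

theorem altPathDigraph_vmap_adjacent (S : (altPathDigraph i).StrongImmersion (altPathDigraph j))
    (hnone : S.vmap none = none) (e : (altPathDigraph i).E) {a b : Fin (2 * j + 1)}
    (ha : S.vmap ((altPathDigraph i).tail e) = some a)
    (hb : S.vmap ((altPathDigraph i).head e) = some b) :
    b.val = a.val + 1 ∨ a.val = b.val + 1 := by
  have hpath (e f : (altPathDigraph j).E) hef htail hhead : _ ∉ {v | v ≠ none} :=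
    not_not.mpr (altPathDigraph_head_eq_none (e := e) (f := f) hef htail hhead)
  have hcompl (v : (altPathDigraph j).V) (hv : v ∉ {v | v ≠ none}) : v ∈ Set.range S.vmap :=
    ⟨none, hnone.trans (not_not.mp hv).symm⟩
  obtain ⟨⟨u, v, c⟩, hu, hv⟩ := S.exists_edge {v | v ≠ none} hpath hcompl e
    (by simp [ha]) (by simp [hb])
  obtain ⟨rfl, rfl⟩ : u = some a ∧ v = some b := ⟨hu.trans ha, hv.trans hb⟩
  have := altPathMult_pos_some c.pos
  omega

theorem altPathDigraph_strongImmersion_isEmpty (hi : 0 < i) (hij : i ≠ j) :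
    IsEmpty ((altPathDigraph i).StrongImmersion (altPathDigraph j)) := by
  refine ⟨fun S => ?_⟩
  have hnone := altPathDigraph_vmap_none hi S.toImmersion
  have hsome (a : Fin (2 * i + 1)) : ∃ b, S.vmap (some a) = some b :=
    Option.ne_none_iff_exists'.mp fun h => Option.some_ne_none a (S.vinj (h.trans hnone.symm))
  choose φ hφ using hsome
  let g (m : ℕ) : ℕ := if h : m < 2 * i + 1 then (φ ⟨m, h⟩).val else 0
  have hg (m : ℕ) (h : m < 2 * i + 1) : g m = (φ ⟨m, h⟩).val := dif_pos h
  have hstep : ∀ m < 2 * i, g (m + 1) = g m + 1 ∨ g m = g (m + 1) + 1 := fun m hm => by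
    rw [hg m (by omega), hg (m + 1) (by omega)]
    obtain ⟨e, ⟨ht, hh⟩ | ⟨ht, hh⟩⟩ :=
      altPathDigraph_exists_edge (k := i) (a := ⟨m, by omega⟩) (b := ⟨m + 1, by omega⟩) rfl
    · exact altPathDigraph_vmap_adjacent S hnone e (ht ▸ hφ _) (hh ▸ hφ _)
    · exact (altPathDigraph_vmap_adjacent S hnone e (ht ▸ hφ _) (hh ▸ hφ _)).symm
  have hback : ∀ m, m + 2 ≤ 2 * i → g (m + 2) ≠ g m := fun m hm h => by
    rw [hg m (by omega), hg (m + 2) (by omega)] at h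
    have := S.vinj ((hφ _).trans ((congrArg some (Fin.ext h)).trans (hφ _).symm))
    simp at this
  have h0 := altPathDigraph_vmap_end S.toImmersion (a := ⟨0, by omega⟩) (.inl rfl) (hφ _)
  have hlast := altPathDigraph_vmap_end S.toImmersion (a := ⟨2 * i, by omega⟩) (.inr rfl) (hφ _)
  rw [← hg] at h0 hlast
  have := end_eq_of_unit_steps hstep hback
  omega

end AltPath

theorem stmt10 :
    ∃ Gf : ℕ → MDigraph,
      (∀ k, (Gf k).Eulerian) ∧
        (∀ i j, i ≠ j → IsEmpty (MDigraph.Iso (Gf i) (Gf j))) ∧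
        (∀ i j, i ≠ j → IsEmpty (MDigraph.StrongImmersion (Gf i) (Gf j))) := by
  refine ⟨fun k => altPathDigraph (k + 1), fun k => altPathDigraph_eulerian k.succ_pos,
    fun i j hij => ⟨fun φ => hij ?_⟩,
    fun i j hij => altPathDigraph_strongImmersion_isEmpty i.succ_pos (by omega)⟩
  have := Fintype.card_congr φ.vequiv
  simp only [Fintype.card_option, Fintype.card_fin] at this
  omega
end

section
/- Every Eulerian digraph G of maximum degree 4 on n vertices strongly immerses into the router R_{6n}. -/
/-- A directed circle: a closed trail without repeated vertices. -/
def MDigraph.Trail.IsCircle {G : MDigraph} (t : G.Trail) : Prop :=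
  t.last = t.first ∧ (t.edges.map G.tail).Nodup

/-- `R` is a `k`-router: an Eulerian digraph on vertex set `{v_{i,j} : i < j}`
covered by `k` pairwise edge-disjoint directed circles such that circles `i` and `j`
intersect exactly in the vertex `v_{i,j}`. -/
def IsRouter (R : MDigraph) (k : ℕ) : Prop :=
  R.Eulerian ∧
    ∃ (φ : R.V ≃ {p : Fin k × Fin k // p.1 < p.2}) (C : Fin k → R.Trail),
      (∀ i, (C i).IsCircle) ∧
        (∀ i j, i ≠ j → (C i).edges.Disjoint (C j).edges) ∧
        (∀ e : R.E, ∃ i, e ∈ (C i).edges) ∧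
        (∀ (i j : Fin k), i < j → ∀ v : R.V,
          ((v ∈ (C i).edges.map R.tail) ∧ (v ∈ (C j).edges.map R.tail)) ↔
            (φ v).val = (i, j))

/-!
Give every vertex `v` of `G` six private circles of the router: two *location* circles, which
meet in the image of `v`, and two *connector* circles for each location circle. As `G` is
Eulerian of maximum degree 4, `v` has at most two out-edges and at most two in-edges, so the
out-edges, and separately the in-edges, can be given distinct location circles of `v`. An edge
from `u` to `w` is routed along its location circle at `u` to an out-connector of that circle,
along it to the meeting point with an in-connector of its location circle at `w`, along this one
to that location circle, and along it to the image of `w`.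

Every connector circle carries a single arc. A location circle carries at most one arc leaving
the image vertex and one arc entering it; taking as out-connector the connector met first when
walking from the image vertex makes these two arcs disjoint. Image vertices lie on location
circles only, and never inside an arc there, so the immersion is strong.
-/

namespace MDigraph.Trail

variable {G : MDigraph}

section Append

variable (t₁ t₂ : G.Trail) (h : t₁.last = t₂.first) (hd : t₁.edges.Disjoint t₂.edges)

def append : G.Trail where
  edges := t₁.edges ++ t₂.edges
  nonempty := by simp [t₁.nonempty]
  chain := by
    refine List.isChain_append.mpr ⟨t₁.chain, t₂.chain, ?_⟩
    simp only [List.getLast?_eq_some_getLast t₁.nonempty, List.head?_eq_some_head t₂.nonempty,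
      Option.mem_some_iff]
    rintro _ rfl _ rfl
    exact h
  nodup := t₁.nodup.append t₂.nodup hd

@[simp]
lemma edges_append : (t₁.append t₂ h hd).edges = t₁.edges ++ t₂.edges := rfl

lemma disjoint_edges_append_left {l : List G.E} :
    (t₁.append t₂ h hd).edges.Disjoint l ↔ t₁.edges.Disjoint l ∧ t₂.edges.Disjoint l :=
  List.disjoint_append_left

@[simp]
lemma first_append : (t₁.append t₂ h hd).first = t₁.first := by
  simp [first, append, List.head_append_of_ne_nil t₁.nonempty]

@[simp]
lemma last_append : (t₁.append t₂ h hd).last = t₂.last := by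
  simp [last, append, List.getLast_append_right t₂.nonempty]

lemma map_head_edges (t : G.Trail) : t.edges.map G.head = t.internals ++ [t.last] := by
  conv_lhs => rw [← List.dropLast_append_getLast t.nonempty]
  simp [internals, last]

@[simp]
lemma internals_append :
    (t₁.append t₂ h hd).internals = t₁.internals ++ t₁.last :: t₂.internals := by
  rw [internals, edges_append, List.dropLast_append_of_ne_nil t₂.nonempty, List.map_append,
    map_head_edges, ← internals]
  simp

end Append

section Cyclic

variable (t : G.Trail)

def vertices : List G.V := t.edges.map G.tail

lemma length_pos : 0 < t.edges.length := List.length_pos_iff.mpr t.nonempty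

def cycEdge (i : ℕ) : G.E := t.edges[i % t.edges.length]'(Nat.mod_lt _ t.length_pos)

def cycVertex (i : ℕ) : G.V := G.tail (t.cycEdge i)

variable {t}

lemma cycEdge_eq_cycEdge_iff {i j : ℕ} :
    t.cycEdge i = t.cycEdge j ↔ i ≡ j [MOD t.edges.length] :=
  t.nodup.getElem_inj_iff

lemma IsCircle.cycVertex_eq_cycVertex_iff (hc : t.IsCircle) {i j : ℕ} :
    t.cycVertex i = t.cycVertex j ↔ i ≡ j [MOD t.edges.length] := by
  have := hc.2.getElem_inj_iff (i := i % t.edges.length) (j := j % t.edges.length)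
    (hi := by simpa using Nat.mod_lt _ t.length_pos)
    (hj := by simpa using Nat.mod_lt _ t.length_pos)
  simpa [cycVertex, cycEdge, Nat.ModEq] using this

lemma IsCircle.head_cycEdge (hc : t.IsCircle) (i : ℕ) :
    G.head (t.cycEdge i) = t.cycVertex (i + 1) := by
  have hr := Nat.mod_lt i t.length_pos
  rw [cycVertex, cycEdge_eq_cycEdge_iff.mpr (Nat.ModEq.add_right 1 (Nat.mod_modEq i _)).symm,
    cycEdge, cycEdge]
  rcases Nat.lt_or_ge (i % t.edges.length + 1) t.edges.length with hlt | hge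
  · simp_rw [Nat.mod_eq_of_lt hlt]
    exact List.isChain_iff_getElem.mp t.chain _ hlt
  · have hlast : i % t.edges.length = t.edges.length - 1 := by omega
    have hwrap : (i % t.edges.length + 1) % t.edges.length = 0 := by
      rw [show i % t.edges.length + 1 = t.edges.length by omega, Nat.mod_self]
    have := hc.1
    rw [last, first, List.getLast_eq_getElem, List.head_eq_getElem] at this
    simp_rw [hwrap, hlast]
    exact this

variable (t)

def pos (x : G.V) : ℕ := t.vertices.idxOf x

def gap (x y : G.V) : ℕ := (t.pos y + t.edges.length - t.pos x) % t.edges.length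

variable {t} {x y : G.V}

lemma pos_lt (hx : x ∈ t.vertices) : t.pos x < t.edges.length := by
  simpa [pos, vertices] using List.idxOf_lt_length_iff.mpr hx

lemma cycVertex_pos (hx : x ∈ t.vertices) : t.cycVertex (t.pos x) = x := by
  have h : t.vertices[t.pos x]'(by simpa [vertices] using pos_lt hx) = x :=
    List.getElem_idxOf _
  simp only [vertices, List.getElem_map] at h
  simp_rw [cycVertex, cycEdge, Nat.mod_eq_of_lt (pos_lt hx), h]

lemma gap_lt : t.gap x y < t.edges.length := Nat.mod_lt _ t.length_pos

lemma pos_add_gap (hx : x ∈ t.vertices) : t.pos x + t.gap x y ≡ t.pos y [MOD t.edges.length] :=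
  calc t.pos x + t.gap x y
      ≡ t.pos x + (t.pos y + t.edges.length - t.pos x) [MOD t.edges.length] :=
        Nat.ModEq.add_left _ (Nat.mod_modEq _ _)
    _ = t.pos y + t.edges.length := by have := pos_lt hx; omega
    _ ≡ t.pos y [MOD t.edges.length] := Nat.add_modEq_right

lemma IsCircle.cycVertex_pos_add_gap (hc : t.IsCircle) (hx : x ∈ t.vertices)
    (hy : y ∈ t.vertices) : t.cycVertex (t.pos x + t.gap x y) = y := by
  rw [hc.cycVertex_eq_cycVertex_iff.mpr (pos_add_gap hx), cycVertex_pos hy]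

lemma IsCircle.gap_pos (hc : t.IsCircle) (hx : x ∈ t.vertices) (hy : y ∈ t.vertices)
    (hxy : x ≠ y) : 0 < t.gap x y := by
  refine Nat.pos_of_ne_zero fun h0 => hxy ?_
  rw [← hc.cycVertex_pos_add_gap hx hy, h0, Nat.add_zero, cycVertex_pos hx]

lemma IsCircle.gap_add_gap (hc : t.IsCircle) (hx : x ∈ t.vertices) (hy : y ∈ t.vertices)
    (hxy : x ≠ y) : t.gap x y + t.gap y x = t.edges.length := by
  have h₁ := hc.gap_pos hx hy hxy
  have hlt := gap_lt (t := t) (x := x) (y := y)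
  have h₂ : t.gap y x = t.edges.length - t.gap x y := by
    refine Nat.ModEq.eq_of_lt_of_lt ?_ gap_lt (by omega)
    refine Nat.ModEq.add_left_cancel' (t.pos x + t.gap x y) ?_
    calc t.pos x + t.gap x y + t.gap y x ≡ t.pos y + t.gap y x [MOD t.edges.length] :=
          Nat.ModEq.add_right _ (pos_add_gap hx)
      _ ≡ t.pos x [MOD t.edges.length] := pos_add_gap hy
      _ ≡ t.pos x + t.edges.length [MOD t.edges.length] := Nat.add_modEq_right.symm
      _ = t.pos x + t.gap x y + (t.edges.length - t.gap x y) := by omega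
  omega

lemma IsCircle.eq_of_gap_eq_gap {p : G.V} (hc : t.IsCircle) (hp : p ∈ t.vertices)
    (hx : x ∈ t.vertices) (hy : y ∈ t.vertices) (h : t.gap p x = t.gap p y) : x = y := by
  rw [← hc.cycVertex_pos_add_gap hp hx, ← hc.cycVertex_pos_add_gap hp hy, h]

end Cyclic

section Arc

variable (t : G.Trail) (x y : G.V)

def arcEdges : List G.E := (List.range (t.gap x y)).map fun i => t.cycEdge (t.pos x + i)

variable {t x y}

lemma mem_arcEdges {a : G.E} :
    a ∈ t.arcEdges x y ↔ ∃ i < t.gap x y, t.cycEdge (t.pos x + i) = a := by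
  simp [arcEdges]

lemma mem_edges_of_mem_arcEdges {a : G.E} (ha : a ∈ t.arcEdges x y) : a ∈ t.edges := by
  obtain ⟨i, -, rfl⟩ := mem_arcEdges.mp ha
  exact List.getElem_mem _

lemma cycVertex_mem_vertices (i : ℕ) : t.cycVertex i ∈ t.vertices :=
  List.mem_map_of_mem (List.getElem_mem _)

lemma nodup_arcEdges : (t.arcEdges x y).Nodup := by
  refine List.nodup_range.map_on fun i hi j hj h => ?_
  rw [List.mem_range] at hi hj
  have := gap_lt (t := t) (x := x) (y := y)
  exact (Nat.ModEq.add_left_cancel' _ (cycEdge_eq_cycEdge_iff.mp h)).eq_of_lt_of_lt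
    (by omega) (by omega)

lemma IsCircle.isChain_arcEdges (hc : t.IsCircle) :
    (t.arcEdges x y).IsChain fun e f => G.head e = G.tail f := by
  refine List.isChain_iff_getElem.mpr fun i hi => ?_
  simp [arcEdges, hc.head_cycEdge, cycVertex, add_assoc]

variable (hc : t.IsCircle) (hx : x ∈ t.vertices) (hy : y ∈ t.vertices) (hxy : x ≠ y)

def arc : G.Trail where
  edges := t.arcEdges x y
  nonempty := by simpa [arcEdges] using (hc.gap_pos hx hy hxy).ne'
  chain := hc.isChain_arcEdges
  nodup := nodup_arcEdges

@[simp]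
lemma edges_arc : (arc hc hx hy hxy).edges = t.arcEdges x y := rfl

@[simp]
lemma first_arc : (arc hc hx hy hxy).first = x := by
  simpa [first, arc, arcEdges, List.head_eq_getElem, cycVertex] using cycVertex_pos hx

@[simp]
lemma last_arc : (arc hc hx hy hxy).last = y := by
  have := hc.gap_pos hx hy hxy
  calc _ = t.cycVertex (t.pos x + (t.gap x y - 1) + 1) := by
        simp [last, arc, arcEdges, List.getLast_eq_getElem, hc.head_cycEdge]
    _ = t.cycVertex (t.pos x + t.gap x y) := by rw [add_assoc, Nat.sub_add_cancel this]
    _ = y := hc.cycVertex_pos_add_gap hx hy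

lemma exists_of_mem_internals_arc {v : G.V} (hv : v ∈ (arc hc hx hy hxy).internals) :
    ∃ i, 0 < i ∧ i < t.gap x y ∧ t.cycVertex (t.pos x + i) = v := by
  obtain ⟨a, ha, rfl⟩ := List.mem_map.mp hv
  obtain ⟨j, hj, rfl⟩ := List.mem_iff_getElem.mp ha
  simp only [List.length_dropLast, edges_arc, arcEdges, List.length_map,
    List.length_range] at hj
  refine ⟨j + 1, by omega, by omega, ?_⟩
  simp [arcEdges, hc.head_cycEdge, add_assoc]

lemma mem_vertices_of_mem_internals_arc {v : G.V} (hv : v ∈ (arc hc hx hy hxy).internals) :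
    v ∈ t.vertices := by
  obtain ⟨i, -, -, rfl⟩ := exists_of_mem_internals_arc hc hx hy hxy hv
  exact cycVertex_mem_vertices _

lemma left_notMem_internals_arc : x ∉ (arc hc hx hy hxy).internals := fun hv => by
  obtain ⟨i, hi₀, hi, hv⟩ := exists_of_mem_internals_arc hc hx hy hxy hv
  have hmod : t.pos x + i ≡ t.pos x + 0 [MOD t.edges.length] :=
    hc.cycVertex_eq_cycVertex_iff.mp (by rw [hv, add_zero, cycVertex_pos hx])
  have := (Nat.ModEq.add_left_cancel' _ hmod).eq_of_lt_of_lt (lt_trans hi gap_lt) t.length_pos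
  omega

lemma right_notMem_internals_arc : y ∉ (arc hc hx hy hxy).internals := fun hv => by
  obtain ⟨i, -, hi, hv⟩ := exists_of_mem_internals_arc hc hx hy hxy hv
  have hmod : t.pos x + i ≡ t.pos x + t.gap x y [MOD t.edges.length] :=
    hc.cycVertex_eq_cycVertex_iff.mp (by rw [hv, hc.cycVertex_pos_add_gap hx hy])
  have := (Nat.ModEq.add_left_cancel' _ hmod).eq_of_lt_of_lt (lt_trans hi gap_lt) gap_lt
  omega

end Arc

lemma IsCircle.disjoint_arcEdges {t : G.Trail} (hc : t.IsCircle) {p x y : G.V}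
    (hp : p ∈ t.vertices) (hx : x ∈ t.vertices) (hpx : p ≠ x)
    (hle : t.gap p y ≤ t.gap p x) :
    (t.arcEdges p y).Disjoint (t.arcEdges x p) := by
  intro a hay hax
  obtain ⟨i, hi, rfl⟩ := mem_arcEdges.mp hay
  obtain ⟨j, hj, h⟩ := mem_arcEdges.mp hax
  have hsum := hc.gap_add_gap hp hx hpx
  have hmod : t.pos p + (t.gap p x + j) ≡ t.pos p + i [MOD t.edges.length] :=
    calc t.pos p + (t.gap p x + j) = t.pos p + t.gap p x + j := by ring
      _ ≡ t.pos x + j [MOD t.edges.length] := Nat.ModEq.add_right _ (pos_add_gap hp)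
      _ ≡ t.pos p + i [MOD t.edges.length] := cycEdge_eq_cycEdge_iff.mp h
  have := (Nat.ModEq.add_left_cancel' _ hmod).eq_of_lt_of_lt (by omega) (by omega)
  omega

end MDigraph.Trail

structure CircleSystem (R : MDigraph) (k : ℕ) where
  label : R.V ≃ {p : Fin k × Fin k // p.1 < p.2}
  circle : Fin k → R.Trail
  isCircle : ∀ i, (circle i).IsCircle
  disjoint : ∀ i j, i ≠ j → (circle i).edges.Disjoint (circle j).edges
  mem_and_mem_iff : ∀ i j, i < j → ∀ v,
    (v ∈ (circle i).vertices ∧ v ∈ (circle j).vertices) ↔ (label v).val = (i, j)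

lemma IsRouter.nonempty_circleSystem {R : MDigraph} {k : ℕ} (h : IsRouter R k) :
    Nonempty (CircleSystem R k) := by
  obtain ⟨-, φ, C, hcirc, hdisj, -, hmem⟩ := h
  exact ⟨⟨φ, C, hcirc, hdisj, hmem⟩⟩

namespace CircleSystem

variable {R : MDigraph} {k : ℕ} (S : CircleSystem R k) {i j m : Fin k}

def meet (i j : Fin k) (h : i ≠ j) : R.V :=
  S.label.symm ⟨(min i j, max i j), min_lt_max.mpr h⟩

lemma meet_comm (h : i ≠ j) : S.meet i j h = S.meet j i h.symm := by
  simp only [meet, min_comm i j, max_comm i j]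

lemma meet_mem_iff_of_lt (hij : i < j) :
    S.meet i j hij.ne ∈ (S.circle m).vertices ↔ m = i ∨ m = j := by
  have hlabel : (S.label (S.meet i j hij.ne)).val = (i, j) := by simp [meet, hij.le]
  obtain ⟨hi, hj⟩ := (S.mem_and_mem_iff i j hij _).mpr hlabel
  refine ⟨fun hm => ?_, by rintro (rfl | rfl) <;> assumption⟩
  rcases lt_trichotomy m i with hmi | rfl | hmi
  · have := (S.mem_and_mem_iff m i hmi _).mp ⟨hm, hi⟩
    rw [hlabel, Prod.mk.injEq] at this
    exact absurd this.1 hmi.ne'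
  · exact Or.inl rfl
  · have := (S.mem_and_mem_iff i m hmi _).mp ⟨hi, hm⟩
    rw [hlabel, Prod.mk.injEq] at this
    exact Or.inr this.2.symm

lemma meet_mem_iff (h : i ≠ j) : S.meet i j h ∈ (S.circle m).vertices ↔ m = i ∨ m = j := by
  rcases h.lt_or_gt with hij | hij
  · exact S.meet_mem_iff_of_lt hij
  · rw [meet_comm, or_comm]
    exact S.meet_mem_iff_of_lt hij

lemma meet_mem_left (h : i ≠ j) : S.meet i j h ∈ (S.circle i).vertices :=
  (S.meet_mem_iff h).mpr (Or.inl rfl)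

lemma meet_mem_right (h : i ≠ j) : S.meet i j h ∈ (S.circle j).vertices :=
  (S.meet_mem_iff h).mpr (Or.inr rfl)

lemma eq_of_meet_eq_meet {j' : Fin k} (h : i ≠ j) (h' : i ≠ j')
    (heq : S.meet i j h = S.meet i j' h') : j = j' := by
  have := (S.meet_mem_iff h).mp (heq ▸ S.meet_mem_right h')
  exact this.resolve_left h'.symm |>.symm

end CircleSystem

/-- `circleOf (v, .inl s)` is the location circle `s` of `v`, and `circleOf (v, .inr (s, b))`
are the two connector circles of it; `outSlot e` and `inSlot e` pick the location circles of `e`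
at its tail and at its head. -/
structure Layout (G : MDigraph) (k : ℕ) where
  circleOf : G.V × (Bool ⊕ Bool × Bool) ↪ Fin k
  outSlot : G.E → Bool
  inSlot : G.E → Bool
  outSlot_injective : Function.Injective fun e => (G.tail e, outSlot e)
  inSlot_injective : Function.Injective fun e => (G.head e, inSlot e)

namespace Layout

open MDigraph.Trail

variable {G R : MDigraph} {k : ℕ} (L : Layout G k) (S : CircleSystem R k)

def loc (v : G.V) (s : Bool) : Fin k := L.circleOf (v, .inl s)

def conn (v : G.V) (s b : Bool) : Fin k := L.circleOf (v, .inr (s, b))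

variable {L} {v w : G.V} {s r b c : Bool}

@[simp]
lemma loc_inj : L.loc v s = L.loc w r ↔ v = w ∧ s = r := by
  simp [loc]

@[simp]
lemma conn_inj : L.conn v s b = L.conn w r c ↔ v = w ∧ s = r ∧ b = c := by
  simp [conn]

@[simp]
lemma loc_ne_conn : L.loc v s ≠ L.conn w r b := by
  simp [loc, conn]

@[simp]
lemma conn_ne_loc : L.conn w r b ≠ L.loc v s :=
  loc_ne_conn.symm

variable (L)

def image (v : G.V) : R.V := S.meet (L.loc v false) (L.loc v true) (by simp)

def connGap (v : G.V) (s b : Bool) : ℕ :=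
  (S.circle (L.loc v s)).gap (L.image S v) (S.meet (L.loc v s) (L.conn v s b) loc_ne_conn)

/-- Of the two connectors of the location circle `(v, s)`, the one met first when walking from
the image of `v` becomes the out-connector. -/
def outFirst (v : G.V) (s : Bool) : Bool :=
  decide (L.connGap S v s true < L.connGap S v s false)

def outConn (v : G.V) (s : Bool) : Fin k := L.conn v s (L.outFirst S v s)

def inConn (v : G.V) (s : Bool) : Fin k := L.conn v s !(L.outFirst S v s)

variable {L S}

lemma image_mem_iff {m : Fin k} :
    L.image S v ∈ (S.circle m).vertices ↔ m = L.loc v false ∨ m = L.loc v true :=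
  S.meet_mem_iff _

lemma image_mem (v : G.V) (s : Bool) : L.image S v ∈ (S.circle (L.loc v s)).vertices :=
  image_mem_iff.mpr (by cases s <;> simp)

lemma image_injective : Function.Injective (L.image S) := fun v w h => by
  have := image_mem_iff.mp (h ▸ image_mem v false)
  simp only [loc_inj] at this
  tauto

@[simp]
lemma loc_ne_outConn : L.loc v s ≠ L.outConn S w r := loc_ne_conn

@[simp]
lemma loc_ne_inConn : L.loc v s ≠ L.inConn S w r := loc_ne_conn

@[simp]
lemma outConn_ne_loc : L.outConn S w r ≠ L.loc v s := conn_ne_loc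

@[simp]
lemma inConn_ne_loc : L.inConn S w r ≠ L.loc v s := conn_ne_loc

lemma gap_meet_outConn_lt (v : G.V) (s : Bool) :
    (S.circle (L.loc v s)).gap (L.image S v)
        (S.meet (L.loc v s) (L.outConn S v s) loc_ne_outConn) <
      (S.circle (L.loc v s)).gap (L.image S v)
        (S.meet (L.loc v s) (L.inConn S v s) loc_ne_inConn) := by
  change L.connGap S v s (L.outFirst S v s) < L.connGap S v s !(L.outFirst S v s)
  by_cases h : L.connGap S v s true < L.connGap S v s false
  · simp [outFirst, h]
  · simp only [outFirst, h, decide_false, Bool.not_false]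
    refine lt_of_le_of_ne (not_lt.mp h) fun heq => ?_
    have hmeet := (S.isCircle _).eq_of_gap_eq_gap (image_mem v s) (S.meet_mem_left _)
      (S.meet_mem_left _) heq
    simpa using S.eq_of_meet_eq_meet _ _ hmeet

@[simp]
lemma outConn_inj : L.outConn S v s = L.outConn S w r ↔ v = w ∧ s = r := by
  refine ⟨fun h => ?_, by rintro ⟨rfl, rfl⟩; rfl⟩
  simp only [outConn, conn_inj] at h
  exact ⟨h.1, h.2.1⟩

@[simp]
lemma inConn_inj : L.inConn S v s = L.inConn S w r ↔ v = w ∧ s = r := by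
  refine ⟨fun h => ?_, by rintro ⟨rfl, rfl⟩; rfl⟩
  simp only [inConn, conn_inj] at h
  exact ⟨h.1, h.2.1⟩

@[simp]
lemma outConn_ne_inConn : L.outConn S v s ≠ L.inConn S w r := by
  intro h
  simp only [outConn, inConn, conn_inj] at h
  obtain ⟨rfl, rfl, h⟩ := h
  simp at h

variable (L S)

def routeCircle (e : G.E) : Fin 4 → Fin k
  | 0 => L.loc (G.tail e) (L.outSlot e)
  | 1 => L.outConn S (G.tail e) (L.outSlot e)
  | 2 => L.inConn S (G.head e) (L.inSlot e)
  | 3 => L.loc (G.head e) (L.inSlot e)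

variable {L S}

lemma eq_or_of_routeCircle_eq {e f : G.E} {i j : Fin 4}
    (h : L.routeCircle S e i = L.routeCircle S f j) :
    e = f ∧ i = j ∨ i = 0 ∧ j = 3 ∨ i = 3 ∧ j = 0 := by
  have hout := @L.outSlot_injective e f
  have hin := @L.inSlot_injective e f
  fin_cases i <;> fin_cases j <;>
    simp_all [routeCircle, outConn_ne_inConn.symm]

lemma routeCircle_ne {e : G.E} {i j : Fin 4}
    (h : ¬(i = j ∨ i = 0 ∧ j = 3 ∨ i = 3 ∧ j = 0)) :
    L.routeCircle S e i ≠ L.routeCircle S e j :=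
  fun heq => h (by simpa using eq_or_of_routeCircle_eq heq)

lemma eq_of_image_mem_routeCircle {z : G.V} {e : G.E} {i : Fin 4}
    (h : L.image S z ∈ (S.circle (L.routeCircle S e i)).vertices) :
    i = 0 ∧ z = G.tail e ∨ i = 3 ∧ z = G.head e := by
  rw [image_mem_iff] at h
  fin_cases i <;> simp [routeCircle] at h ⊢ <;> tauto

lemma image_notMem_routeCircle {z : G.V} {e : G.E} {i : Fin 4} (hi : i = 1 ∨ i = 2) :
    L.image S z ∉ (S.circle (L.routeCircle S e i)).vertices := fun h => by
  rcases eq_of_image_mem_routeCircle h with ⟨rfl, -⟩ | ⟨rfl, -⟩ <;> simp at hi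

variable (L S)

def waypoint (e : G.E) : Fin 5 → R.V
  | 0 => L.image S (G.tail e)
  | 1 => S.meet (L.routeCircle S e 0) (L.routeCircle S e 1) (routeCircle_ne (by decide))
  | 2 => S.meet (L.routeCircle S e 1) (L.routeCircle S e 2) (routeCircle_ne (by decide))
  | 3 => S.meet (L.routeCircle S e 2) (L.routeCircle S e 3) (routeCircle_ne (by decide))
  | 4 => L.image S (G.head e)

variable {L S}

lemma waypoint_castSucc_mem (e : G.E) :
    ∀ i : Fin 4, L.waypoint S e i.castSucc ∈ (S.circle (L.routeCircle S e i)).vertices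
  | 0 => image_mem _ _
  | 1 | 2 | 3 => S.meet_mem_right (routeCircle_ne (by decide))

lemma waypoint_succ_mem (e : G.E) :
    ∀ i : Fin 4, L.waypoint S e i.succ ∈ (S.circle (L.routeCircle S e i)).vertices
  | 0 | 1 | 2 => S.meet_mem_left (routeCircle_ne (by decide))
  | 3 => image_mem _ _

lemma waypoint_castSucc_ne_succ (e : G.E) :
    ∀ i : Fin 4, L.waypoint S e i.castSucc ≠ L.waypoint S e i.succ
  | 0, h => image_notMem_routeCircle (i := 1) (by simp) (h ▸ waypoint_castSucc_mem e 1)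
  | 1, h => ((S.meet_mem_iff (routeCircle_ne (by decide))).mp
      (h ▸ waypoint_castSucc_mem e 2)).elim (routeCircle_ne (by decide))
      (routeCircle_ne (by decide))
  | 2, h => ((S.meet_mem_iff (routeCircle_ne (by decide))).mp
      (h ▸ waypoint_castSucc_mem e 3)).elim (routeCircle_ne (by decide))
      (routeCircle_ne (by decide))
  | 3, h => image_notMem_routeCircle (i := 2) (by simp) (h ▸ waypoint_succ_mem e 2)

variable (L S)

def leg (e : G.E) (i : Fin 4) : R.Trail :=
  arc (S.isCircle _) (L.waypoint_castSucc_mem (S := S) e i) (L.waypoint_succ_mem e i)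
    (L.waypoint_castSucc_ne_succ e i)

variable {L S}

@[simp]
lemma first_leg (e : G.E) (i : Fin 4) : (L.leg S e i).first = L.waypoint S e i.castSucc :=
  first_arc ..

@[simp]
lemma last_leg (e : G.E) (i : Fin 4) : (L.leg S e i).last = L.waypoint S e i.succ :=
  last_arc ..

lemma disjoint_arcEdges_of_loc_eq {v w : G.V} {s r : Bool} (h : L.loc v s = L.loc w r) :
    ((S.circle (L.loc v s)).arcEdges (L.image S v)
        (S.meet (L.loc v s) (L.outConn S v s) loc_ne_outConn)).Disjoint
      ((S.circle (L.loc w r)).arcEdges (S.meet (L.inConn S w r) (L.loc w r) loc_ne_inConn.symm)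
        (L.image S w)) := by
  obtain ⟨rfl, rfl⟩ := loc_inj.mp h
  rw [S.meet_comm (i := L.inConn S v s)]
  refine (S.isCircle _).disjoint_arcEdges (image_mem v s) (S.meet_mem_left _) (fun h => ?_)
    (gap_meet_outConn_lt v s).le
  have := image_mem_iff.mp (h ▸ S.meet_mem_right _)
  simp at this

lemma disjoint_legs {e f : G.E} {i j : Fin 4} (h : (e, i) ≠ (f, j)) :
    (L.leg S e i).edges.Disjoint (L.leg S f j).edges := by
  by_cases hc : L.routeCircle S e i = L.routeCircle S f j
  · rcases eq_or_of_routeCircle_eq hc with ⟨rfl, rfl⟩ | ⟨rfl, rfl⟩ | ⟨rfl, rfl⟩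
    · exact absurd rfl h
    · exact disjoint_arcEdges_of_loc_eq hc
    · exact (disjoint_arcEdges_of_loc_eq hc.symm).symm
  · exact fun a ha hb =>
      S.disjoint _ _ hc (mem_edges_of_mem_arcEdges ha) (mem_edges_of_mem_arcEdges hb)

variable (L S)

def route (e : G.E) : R.Trail :=
  (((L.leg S e 0).append (L.leg S e 1)
        ((last_leg e 0).trans (first_leg e 1).symm) (disjoint_legs (by simp))).append
      (L.leg S e 2) ((last_append ..).trans ((last_leg e 1).trans (first_leg e 2).symm))
      ((disjoint_edges_append_left ..).mpr
        ⟨disjoint_legs (by simp), disjoint_legs (by simp)⟩)).append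
    (L.leg S e 3) ((last_append ..).trans ((last_leg e 2).trans (first_leg e 3).symm))
    ((disjoint_edges_append_left ..).mpr ⟨(disjoint_edges_append_left ..).mpr
      ⟨disjoint_legs (by simp), disjoint_legs (by simp)⟩, disjoint_legs (by simp)⟩)

variable {L S}

lemma first_route (e : G.E) : (L.route S e).first = L.image S (G.tail e) := by
  rw [route, first_append, first_append, first_append, first_leg]
  rfl

lemma last_route (e : G.E) : (L.route S e).last = L.image S (G.head e) := by
  rw [route, last_append, last_leg]
  rfl

lemma internals_route (e : G.E) : (L.route S e).internals =
    (L.leg S e 0).internals ++ L.waypoint S e 1 :: (L.leg S e 1).internals ++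
      L.waypoint S e 2 :: (L.leg S e 2).internals ++
        L.waypoint S e 3 :: (L.leg S e 3).internals := by
  rw [route, internals_append, internals_append, internals_append, last_append, last_append,
    last_leg, last_leg, last_leg]
  simp

lemma exists_mem_edges_leg {e : G.E} {a : R.E} (ha : a ∈ (L.route S e).edges) :
    ∃ i, a ∈ (L.leg S e i).edges := by
  rw [route, edges_append, edges_append, edges_append] at ha
  simp only [List.mem_append] at ha
  rcases ha with ((h | h) | h) | h
  exacts [⟨0, h⟩, ⟨1, h⟩, ⟨2, h⟩, ⟨3, h⟩]

lemma disjoint_route {e f : G.E} (hef : e ≠ f) :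
    (L.route S e).edges.Disjoint (L.route S f).edges := fun a ha hb => by
  obtain ⟨i, hi⟩ := exists_mem_edges_leg ha
  obtain ⟨j, hj⟩ := exists_mem_edges_leg hb
  exact disjoint_legs (by simp [hef]) hi hj

lemma image_notMem_internals_leg (z : G.V) (e : G.E) (i : Fin 4) :
    L.image S z ∉ (L.leg S e i).internals := fun hz => by
  rcases eq_of_image_mem_routeCircle (mem_vertices_of_mem_internals_arc _ _ _ _ hz) with
    ⟨rfl, rfl⟩ | ⟨rfl, rfl⟩
  · exact left_notMem_internals_arc _ _ _ _ hz
  · exact right_notMem_internals_arc _ _ _ _ hz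

lemma image_notMem_internals_route (e : G.E) (z : G.V) :
    L.image S z ∉ (L.route S e).internals := by
  have hleg := image_notMem_internals_leg (L := L) (S := S) z e
  have h₁ := image_notMem_routeCircle (L := L) (S := S) (z := z) (e := e) (i := 1) (by simp)
  have h₂ := image_notMem_routeCircle (L := L) (S := S) (z := z) (e := e) (i := 2) (by simp)
  simp only [internals_route, List.mem_append, List.mem_cons, not_or]
  refine ⟨⟨⟨hleg 0, fun h => h₁ (h ▸ waypoint_castSucc_mem e 1), hleg 1⟩,
    fun h => h₂ (h ▸ waypoint_castSucc_mem e 2), hleg 2⟩,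
    fun h => h₂ (h ▸ waypoint_succ_mem e 2), hleg 3⟩

variable (L S)

def toStrongImmersion : G.StrongImmersion R where
  vmap := L.image S
  vinj := image_injective
  emap := L.route S
  first_eq := first_route
  last_eq := last_route
  edisj _ _ := disjoint_route
  strong := image_notMem_internals_route

end Layout

lemma exists_injective_prod_bool {α β : Type*} [Fintype α] [DecidableEq β] (m : α → β)
    (h : ∀ b, Fintype.card {a // m a = b} ≤ 2) :
    ∃ ℓ : α → Bool, Function.Injective fun a => (m a, ℓ a) := by
  have g : ∀ b, {a // m a = b} ↪ Bool := fun b =>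
    (Function.Embedding.nonempty_of_card_le ((h b).trans_eq Fintype.card_bool.symm)).some
  let ι : α ↪ β × Bool :=
    ((Equiv.sigmaFiberEquiv m).symm.toEmbedding.trans
      (Function.Embedding.sigmaMap (Function.Embedding.refl β) g)).trans
      (Equiv.sigmaEquivProd β Bool).toEmbedding
  exact ⟨fun a => (ι a).2, ι.injective⟩

lemma Layout.nonempty_of_card_le {G : MDigraph} {k : ℕ} (hk : Fintype.card G.V * 6 ≤ k)
    (hout : ∀ v, Fintype.card {e // G.tail e = v} ≤ 2)
    (hin : ∀ v, Fintype.card {e // G.head e = v} ≤ 2) : Nonempty (Layout G k) := by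
  obtain ⟨circleOf⟩ := Function.Embedding.nonempty_of_card_le
    (α := G.V × (Bool ⊕ Bool × Bool)) (β := Fin k) (by simpa using hk)
  obtain ⟨outSlot, hout⟩ := exists_injective_prod_bool G.tail hout
  obtain ⟨inSlot, hin⟩ := exists_injective_prod_bool G.head hin
  exact ⟨⟨circleOf, outSlot, inSlot, hout, hin⟩⟩

theorem stmt12 (G : MDigraph) (hG : G.Eulerian)
    (hdeg : ∀ v : G.V,
      Nat.card {e : G.E // G.tail e = v} + Nat.card {e : G.E // G.head e = v} ≤ 4)
    (R : MDigraph) (hR : IsRouter R (6 * Nat.card G.V)) :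
    Nonempty (MDigraph.StrongImmersion G R) := by
  obtain ⟨S⟩ := hR.nonempty_circleSystem
  have hdeg₂ (v : G.V) : Fintype.card {e // G.tail e = v} ≤ 2 ∧
      Fintype.card {e // G.head e = v} ≤ 2 := by
    have := hG v
    have := hdeg v
    simp only [Nat.card_eq_fintype_card] at *
    omega
  obtain ⟨L⟩ : Nonempty (Layout G (6 * Nat.card G.V)) :=
    Layout.nonempty_of_card_le (by rw [Nat.card_eq_fintype_card]; omega)
    (fun v => (hdeg₂ v).1) (fun v => (hdeg₂ v).2)
  exact ⟨L.toStrongImmersion S⟩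
end
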